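/- Let 𝒜 be a disjunctive APT (an alternating parity tree automaton whose transition function maps each (state, symbol) pair to a positive Boolean formula containing no conjunctions). Then 𝒜 has an accepting run-tree over a ranked tree T if and only if 𝒜 has an accepting run-tree over T in which every node has at most one child. -/

import Mathlib

/-- Positive Boolean formulas over X. -/
inductive PBF (X : Type) : Type
  | tt : PBF X
  | ff : PBF X
  | var : X → PBF X
  | and : PBF X → PBF X → PBF X
  | or : PBF X → PBF X → PBF X

/-- `Y` satisfies a positive Boolean formula: assign true exactly on `Y`. -/
def PBF.Sat {X : Type} (Y : Set X) : PBF X → Prop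
  | .tt => True
  | .ff => False
  | .var x => x ∈ Y
  | .and a b => PBF.Sat Y a ∧ PBF.Sat Y b
  | .or a b => PBF.Sat Y a ∨ PBF.Sat Y b

/-- The variables occurring in a formula. -/
def PBF.vars {X : Type} : PBF X → Set X
  | .tt => ∅
  | .ff => ∅
  | .var x => {x}
  | .and a b => a.vars ∪ b.vars
  | .or a b => a.vars ∪ b.vars

/-- A formula is disjunctive if it contains no conjunctions. -/
def PBF.Disjunctive {X : Type} : PBF X → Prop
  | .tt => True
  | .ff => True
  | .var _ => True
  | .and _ _ => False
  | .or a b => a.Disjunctive ∧ b.Disjunctive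

/-- An alternating parity tree automaton over a ranked alphabet `S` with states `Q`.
`δ q f ∈ B⁺({1,…,arity f} × Q)`. -/
structure APT (S Q : Type) where
  arity : S → ℕ
  qI : Q
  delta : Q → S → PBF (ℕ × Q)
  prio : Q → ℕ
  wf : ∀ q f, (delta q f).vars ⊆ {p : ℕ × Q | 1 ≤ p.1 ∧ p.1 ≤ arity f}

/-- A Σ-labelled ranked tree: nonempty, prefix-closed partial map with each node
labelled `f` having children exactly 1,…,arity f. -/
def IsRankedTree {S : Type} (ar : S → ℕ) (T : List ℕ → Option S) : Prop :=
  T [] ≠ none ∧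
  (∀ s k, T (s ++ [k]) ≠ none → T s ≠ none) ∧
  (∀ s f, T s = some f → ∀ j, (T (s ++ [j]) ≠ none ↔ 1 ≤ j ∧ j ≤ ar f))

/-- The length-`n` prefix of the infinite path `d`. -/
def pfx (d : ℕ → ℕ) (n : ℕ) : List ℕ := (List.range n).map d

/-- `m` occurs infinitely often in the stream `p`. -/
def InfOft (p : ℕ → ℕ) (m : ℕ) : Prop := ∀ N, ∃ n, N ≤ n ∧ p n = m

/-- The parity condition: the largest value occurring infinitely often in `p` is even. -/
def ParityGood (p : ℕ → ℕ) : Prop :=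
  ∃ m, Even m ∧ InfOft p m ∧ ∀ m', InfOft p m' → m' ≤ m

/-- A run-tree of an APT over a tree `T`: a (dom(T) × Q)-labelled unranked tree. -/
def IsRunTree {S Q : Type} (A : APT S Q) (T : List ℕ → Option S)
    (r : List ℕ → Option (List ℕ × Q)) : Prop :=
  r [] = some ([], A.qI) ∧
  (∀ β j, r (β ++ [j]) ≠ none → r β ≠ none) ∧
  (∀ β α q, r β = some (α, q) →
    ∃ f, T α = some f ∧ ∃ Sset : Set (ℕ × Q), PBF.Sat Sset (A.delta q f) ∧
      ∀ p ∈ Sset, ∃ j, r (β ++ [j]) = some (α ++ [p.1], p.2))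

/-- A run-tree is accepting if every infinite path satisfies the parity condition. -/
def AcceptingRun {S Q : Type} (A : APT S Q) (r : List ℕ → Option (List ℕ × Q)) : Prop :=
  ∀ (d : ℕ → ℕ) (as : ℕ → List ℕ) (qs : ℕ → Q),
    (∀ n, r (pfx d n) = some (as n, qs n)) →
    ParityGood (fun n => A.prio (qs n))

/-- An APT accepts a tree if it has an accepting run-tree over it. -/
def APT.Accepts {S Q : Type} (A : APT S Q) (T : List ℕ → Option S) : Prop :=
  ∃ r, IsRunTree A T r ∧ AcceptingRun A r


lemma PBF.disj_sat {X : Type} {Y : Set X} {φ : PBF X} (hd : φ.Disjunctive) (hs : φ.Sat Y) :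
    φ.Sat (∅ : Set X) ∨ ∃ x ∈ Y, φ.Sat {x} := by
  induction φ with
  | tt => exact Or.inl trivial
  | ff => exact hs.elim
  | var x => exact Or.inr ⟨x, hs, rfl⟩
  | and a b iha ihb => exact hd.elim
  | or a b iha ihb =>
    rcases hs with h | h
    · rcases iha hd.1 h with h' | ⟨x, hx, h'⟩
      · exact Or.inl (Or.inl h')
      · exact Or.inr ⟨x, hx, Or.inl h'⟩
    · rcases ihb hd.2 h with h' | ⟨x, hx, h'⟩
      · exact Or.inl (Or.inr h')
      · exact Or.inr ⟨x, hx, Or.inr h'⟩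

def iterPath (step : List ℕ → Option ℕ) : ℕ → Option (List ℕ)
  | 0 => some []
  | n + 1 => (iterPath step n).bind fun β => (step β).map (fun j => β ++ [j])

/-- A disjunctive APT has an accepting run-tree over a ranked tree `T` iff it has an
accepting run-tree over `T` in which every node has at most one child. -/
theorem disjunctive_apt_linear_run {S Q : Type} (A : APT S Q)
    (hA : ∀ q f, (A.delta q f).Disjunctive)
    (T : List ℕ → Option S) (hT : IsRankedTree A.arity T) :
    A.Accepts T ↔
      ∃ r, IsRunTree A T r ∧ AcceptingRun A r ∧
        ∀ β j k, r (β ++ [j]) ≠ none → r (β ++ [k]) ≠ none → j = k := by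
  constructor
  · rintro ⟨r, hrun, hacc⟩
    classical
    obtain ⟨hroot, hpc, htrans⟩ := hrun
    -- choose a step for each node
    have hstepEx : ∀ β : List ℕ, ∃ o : Option ℕ,
        (∀ α q f, r β = some (α, q) → T α = some f → o = none → PBF.Sat ∅ (A.delta q f)) ∧
        (∀ j, o = some j → ∃ α q f p, r β = some (α, q) ∧ T α = some f ∧
          PBF.Sat {p} (A.delta q f) ∧ r (β ++ [j]) = some (α ++ [p.1], p.2)) := by
      intro β
      by_cases hβ : ∃ α q, r β = some (α, q)
      · obtain ⟨α, q, hr⟩ := hβ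
        obtain ⟨f, hf, Sset, hsat, hch⟩ := htrans β α q hr
        rcases PBF.disj_sat (hA q f) hsat with hemp | ⟨p, hpS, hp1⟩
        · refine ⟨none, ?_, ?_⟩
          · intro α' q' f' h1 h2 _
            rw [hr] at h1
            obtain ⟨h1a, h1b⟩ := Prod.mk.injEq .. ▸ Option.some.inj h1
            subst h1a; subst h1b
            rw [hf] at h2
            exact Option.some.inj h2 ▸ hemp
          · intro j hj; exact absurd hj (by simp)
        · obtain ⟨j, hj⟩ := hch p hpS
          refine ⟨some j, ?_, ?_⟩
          · intro _ _ _ _ _ h; exact absurd h (by simp)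
          · intro j' hj'
            obtain rfl : j = j' := Option.some.inj hj'
            exact ⟨α, q, f, p, hr, hf, hp1, hj⟩
      · refine ⟨none, ?_, ?_⟩
        · intro α q _ h1 _ _; exact absurd ⟨α, q, h1⟩ hβ
        · intro j hj; exact absurd hj (by simp)
    choose step hstep0 hstep1 using hstepEx
    -- the path
    set path : ℕ → Option (List ℕ) := iterPath step with hpathdef
    have hpath0 : path 0 = some [] := rfl
    have hpathS : ∀ n, path (n + 1) = (path n).bind fun β =>
        (step β).map (fun j => β ++ [j]) := fun _ => rfl
    have hpathInv : ∀ n β, path n = some β → β.length = n ∧ r β ≠ none := by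
      intro n
      induction n with
      | zero =>
        intro β hβ
        obtain rfl : ([] : List ℕ) = β := Option.some.inj hβ
        exact ⟨rfl, by simp [hroot]⟩
      | succ n ih =>
        intro γ hγ
        rw [hpathS] at hγ
        rw [Option.bind_eq_some_iff] at hγ
        obtain ⟨β, hβ, hγ⟩ := hγ
        rw [Option.map_eq_some_iff] at hγ
        obtain ⟨j, hj, rfl⟩ := hγ
        obtain ⟨hlen, _⟩ := ih β hβ
        obtain ⟨α, q, f, p, hr, hf, hp1, hch⟩ := hstep1 β j hj
        exact ⟨by simp [hlen], by simp [hch]⟩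
    -- the linear run
    let r' : List ℕ → Option (List ℕ × Q) :=
      fun β => if path β.length = some β then r β else none
    have hr'def : ∀ β, r' β = if path β.length = some β then r β else none := fun _ => rfl
    have hsome : ∀ β x, r' β = some x → path β.length = some β ∧ r β = some x := by
      intro β x h
      rw [hr'def β] at h
      by_cases hc : path β.length = some β
      · rw [if_pos hc] at h; exact ⟨hc, h⟩
      · rw [if_neg hc] at h; exact absurd h (by simp)
    have hne : ∀ β, r' β ≠ none → path β.length = some β ∧ r β ≠ none := by
      intro β h
      rcases Option.ne_none_iff_exists'.mp h with ⟨x, hx⟩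
      obtain ⟨h1, h2⟩ := hsome β x hx
      exact ⟨h1, by simp [h2]⟩
    -- key: a child in r' forces the step
    have hchild : ∀ β j, r' (β ++ [j]) ≠ none →
        path β.length = some β ∧ step β = some j := by
      intro β j h
      obtain ⟨h1, _⟩ := hne _ h
      rw [List.length_append, List.length_singleton, hpathS, Option.bind_eq_some_iff] at h1
      obtain ⟨β', hβ', h1⟩ := h1
      rw [Option.map_eq_some_iff] at h1
      obtain ⟨j', hj', heq⟩ := h1
      obtain ⟨hlen, _⟩ := hpathInv _ _ hβ'
      obtain ⟨rfl, hjj⟩ := List.append_inj heq (by omega)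
      obtain rfl : j' = j := by simpa using hjj
      exact ⟨hβ', hj'⟩
    refine ⟨r', ⟨?_, ?_, ?_⟩, ?_, ?_⟩
    · show r' [] = some ([], A.qI)
      rw [hr'def []]
      simp only [List.length_nil, hpath0, if_pos rfl]
      exact hroot
    · intro β j h
      obtain ⟨h1, hj⟩ := hchild β j h
      obtain ⟨_, _, _, _, hr, _, _, hch⟩ := hstep1 β j hj
      rw [hr'def β]
      simp only [h1, if_pos rfl]
      simp [hr]
    · intro β α q hβ
      obtain ⟨h1, hr⟩ := hsome β _ hβ
      obtain ⟨f, hf, _, _, _⟩ := htrans β α q hr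
      refine ⟨f, hf, ?_⟩
      cases hstepc : step β with
      | none =>
        exact ⟨∅, hstep0 β α q f hr hf hstepc, fun p hp => absurd hp (by simp)⟩
      | some j =>
        obtain ⟨α', q', f', p, hr', hf', hp1, hch⟩ := hstep1 β j hstepc
        rw [hr] at hr'
        obtain ⟨rfl, rfl⟩ := Prod.mk.injEq .. ▸ Option.some.inj hr'
        rw [hf] at hf'
        obtain rfl : f = f' := Option.some.inj hf'
        refine ⟨{p}, hp1, ?_⟩
        intro p' hp'
        obtain rfl : p' = p := hp'
        refine ⟨j, ?_⟩
        rw [hr'def (β ++ [j])]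
        have hplen : path (β ++ [j]).length = some (β ++ [j]) := by
          rw [List.length_append, List.length_singleton, hpathS, h1]
          simp [hstepc]
        simp only [hplen, if_pos rfl]
        exact hch
    · intro d as qs h
      exact hacc d as qs fun n => (hsome _ _ (h n)).2
    · intro β j k hj hk
      have h1 := (hne _ hj).1
      have h2 := (hne _ hk).1
      rw [List.length_append] at h1 h2
      rw [List.length_singleton] at h1 h2
      rw [h1] at h2
      simpa using Option.some.inj h2
  · rintro ⟨r, h1, h2, _⟩
    exact ⟨r, h1, h2⟩
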